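/- There is a bijection between the set of ν-Schröder trees and the set of ν-Schröder paths, given by the left-flushing and right-flushing maps. -/

import Mathlib

/-- Steps of a (Schröder) lattice path: north, east, diagonal. -/
inductive Step : Type
  | N | E | D
deriving DecidableEq, Repr

/-- Total horizontal displacement of a path. -/
def eLen (p : List Step) : ℕ := p.count Step.E + p.count Step.D

/-- Total vertical displacement of a path. -/
def nLen (p : List Step) : ℕ := p.count Step.N + p.count Step.D

/-- A lattice path uses only `N` and `E` steps. -/
def IsLatticePath (ν : List Step) : Prop := Step.D ∉ ν

/-- `colVal p x` is twice the starting height of the step of `p` crossing the vertical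
strip between abscissas `x` and `x+1`, plus `1` if that step is diagonal.  Comparing these
values columnwise is equivalent to comparing the heights of the paths over each strip. -/
def colVal : List Step → ℕ → ℕ
  | [], _ => 0
  | Step.N :: p, x => colVal p x + 2
  | Step.E :: _, 0 => 0
  | Step.E :: p, x+1 => colVal p x
  | Step.D :: _, 0 => 1
  | Step.D :: p, x+1 => colVal p x + 2

/-- `π` stays weakly above `ρ` (same endpoints intended). -/
def WeaklyAbove (π ρ : List Step) : Prop := ∀ x, colVal ρ x ≤ colVal π x

/-- Replace every peak (consecutive `NE`) of a path by a diagonal step; applied to `ν`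
this gives the path `μ` of the large ν-Schröder path definition. -/
def cutPeaks : List Step → List Step
  | [] => []
  | Step.N :: Step.E :: p => Step.D :: cutPeaks p
  | s :: p => s :: cutPeaks p

/-- A ν-Dyck path: an `N,E` path with the same endpoints as `ν` staying weakly above `ν`. -/
def IsNuDyck (ν π : List Step) : Prop :=
  Step.D ∉ π ∧ eLen π = eLen ν ∧ nLen π = nLen ν ∧ WeaklyAbove π ν

/-- A (small) ν-Schröder path: an `N,E,D` path with the same endpoints as `ν` staying weakly
above `ν` (this automatically forbids diagonal steps on the ν-diagonal). -/
def IsSmallSchroder (ν π : List Step) : Prop :=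
  eLen π = eLen ν ∧ nLen π = nLen ν ∧ WeaklyAbove π ν

/-- A large ν-Schröder path: an `N,E,D` path with the same endpoints as `ν` staying weakly
above the path obtained from `ν` by replacing each peak by a diagonal step. -/
def IsLargeSchroder (ν π : List Step) : Prop :=
  eLen π = eLen ν ∧ nLen π = nLen ν ∧ WeaklyAbove π (cutPeaks ν)

/-- Number of peaks (consecutive `NE` pairs). -/
def peaks (p : List Step) : ℕ := (p.zip p.tail).count (Step.N, Step.E)

/-- Number of valleys (consecutive `EN` pairs). -/
def valleys (p : List Step) : ℕ := (p.zip p.tail).count (Step.E, Step.N)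

/-- Lattice points at which valleys of a path occur (starting the path at `(x,y)`). -/
def valleyPts : List Step → ℕ → ℕ → List (ℕ × ℕ)
  | [], _, _ => []
  | Step.E :: p, x, y =>
      (if p.head? = some Step.N then [(x+1, y)] else []) ++ valleyPts p (x+1) y
  | Step.N :: p, x, y => valleyPts p x (y+1)
  | Step.D :: p, x, y => valleyPts p (x+1) (y+1)

/-- Lattice points at which high peaks (peaks strictly above `ν`) of a path occur. -/
def highPeakPts (ν : List Step) : List Step → ℕ → ℕ → List (ℕ × ℕ)
  | [], _, _ => []
  | Step.N :: p, x, y =>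
      (if p.head? = some Step.E ∧ colVal ν x < 2*(y+1) then [(x, y+1)] else []) ++
        highPeakPts ν p x (y+1)
  | Step.E :: p, x, y => highPeakPts ν p (x+1) y
  | Step.D :: p, x, y => highPeakPts ν p (x+1) (y+1)

/-- Number of high peaks of `π` relative to `ν`. -/
def highPeaks (ν π : List Step) : ℕ := (highPeakPts ν π 0 0).length

/-- j-th ν-Narayana number: number of ν-Dyck paths with exactly `j` valleys. -/
noncomputable def Nar (ν : List Step) (j : ℕ) : ℕ :=
  Nat.card {π : List Step // IsNuDyck ν π ∧ valleys π = j}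

/-- Number of small ν-Schröder paths with exactly `i` diagonal steps. -/
noncomputable def schNum (ν : List Step) (i : ℕ) : ℕ :=
  Nat.card {π : List Step // IsSmallSchroder ν π ∧ π.count Step.D = i}

/-- `lowH ν x` is the lowest height of a point of `ν` at abscissa `x`. -/
def lowH : List Step → ℕ → ℕ
  | _, 0 => 0
  | [], _+1 => 0
  | Step.N :: p, x+1 => lowH p (x+1) + 1
  | Step.E :: p, x+1 => lowH p x
  | Step.D :: p, x+1 => lowH p x + 1

/-- The lowest lattice path from `(0,0)` to `(b,a)` weakly above the line segment
from `(0,0)` to `(b,a)`. -/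
def nuAB (a b : ℕ) : List Step :=
  (List.range b).flatMap (fun x =>
    List.replicate (((x+1)*a + b - 1)/b - (x*a + b - 1)/b) Step.N ++ [Step.E])

/-- Number of large rational `(a,b)`-Schröder paths with `i` diagonal steps. -/
noncomputable def largeCount (a b i : ℕ) : ℕ :=
  Nat.card {π : List Step // IsLargeSchroder (nuAB a b) π ∧ π.count Step.D = i}

/-- Number of small rational `(a,b)`-Schröder paths with `i` diagonal steps. -/
noncomputable def smallCount (a b i : ℕ) : ℕ :=
  Nat.card {π : List Step // IsSmallSchroder (nuAB a b) π ∧ π.count Step.D = i}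

/-- Binomial coefficient with an integer lower entry (zero when negative). -/
def chooseZ (n : ℕ) (k : ℤ) : ℕ := if 0 ≤ k then n.choose k.toNat else 0

/-- The region weakly above `ν` in the rectangle `[0,b] × [0,a]`. -/
def InRegion (ν : List Step) (p : ℕ × ℕ) : Prop :=
  p.1 ≤ eLen ν ∧ p.2 ≤ nLen ν ∧ lowH ν p.1 ≤ p.2

/-- Two points of the region are ν-incompatible if one is strictly southwest of the other and
the rectangle they span lies in the region (equivalently its bottom-right corner does). -/
def Incompat (ν : List Step) (p q : ℕ × ℕ) : Prop :=
  ((p.1 < q.1 ∧ p.2 < q.2) ∨ (q.1 < p.1 ∧ q.2 < p.2)) ∧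
    InRegion ν (max p.1 q.1, min p.2 q.2)

/-- A ν-binary tree: a maximal set of pairwise ν-compatible points of the region. -/
def IsBinaryTree (ν : List Step) (T : Finset (ℕ × ℕ)) : Prop :=
  (∀ p ∈ T, InRegion ν p) ∧ (∀ p ∈ T, ∀ q ∈ T, ¬ Incompat ν p q) ∧
    ∀ r, InRegion ν r → (∀ p ∈ T, ¬ Incompat ν r p) → r ∈ T

/-- A ν-Schröder tree: pairwise ν-compatible points of the region containing the root
`(0,a)` and meeting every row and every column. -/
def IsSchroderTree (ν : List Step) (T : Finset (ℕ × ℕ)) : Prop :=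
  (∀ p ∈ T, InRegion ν p) ∧ (∀ p ∈ T, ∀ q ∈ T, ¬ Incompat ν p q) ∧
    (0, nLen ν) ∈ T ∧ (∀ y ≤ nLen ν, ∃ p ∈ T, p.2 = y) ∧ (∀ x ≤ eLen ν, ∃ p ∈ T, p.1 = x)

/-- One contraction step: delete a node, provided the result is still a ν-Schröder tree. -/
def ContractStep (ν : List Step) (T T' : Finset (ℕ × ℕ)) : Prop :=
  ∃ q ∈ T, T' = T.erase q ∧ IsSchroderTree ν T'

/-- `p` is a leaf of the (plane tree associated to the) node set `T`: no node strictly below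
it in its column and none strictly to its right in its row. -/
def IsLeafIn (T : Finset (ℕ × ℕ)) (p : ℕ × ℕ) : Prop :=
  (∀ q ∈ T, ¬(q.1 = p.1 ∧ q.2 < p.2)) ∧ (∀ q ∈ T, ¬(q.2 = p.2 ∧ p.1 < q.1))

/-- Starting points of vertical runs and ending points of horizontal runs of `ν`. -/
def leafPts (ν : List Step) : Finset (ℕ × ℕ) :=
  (valleyPts ν 0 0).toFinset ∪ (if ν.head? = some Step.N then {((0 : ℕ), (0 : ℕ))} else ∅) ∪
    (if ν.getLast? = some Step.E then {(eLen ν, nLen ν)} else ∅)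

/-- `horizNu ν x y`: maximal number of east steps that can be placed starting at `(x,y)`
before crossing `ν` (staying within the bounding rectangle). -/
def horizNu (ν : List Step) (x y : ℕ) : ℕ :=
  ((Finset.Icc 1 (eLen ν - x)).filter (fun k => lowH ν (x + k) ≤ y)).card

/-- No `N` step of the given path (started at `(x,y)`) has initial point with
`horizNu`-value `h`. -/
def noNAt (ν : List Step) (h : ℕ) : List Step → ℕ → ℕ → Prop
  | [], _, _ => True
  | Step.N :: p, x, y => horizNu ν x y ≠ h ∧ noNAt ν h p x (y+1)
  | Step.E :: p, x, y => noNAt ν h p (x+1) y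
  | Step.D :: p, x, y => noNAt ν h p (x+1) (y+1)

/-- Right contraction: replace a consecutive `EN` pair (a valley) by a `D` step. -/
def RightC (μ lam : List Step) : Prop :=
  ∃ p q, μ = p ++ Step.E :: Step.N :: q ∧ lam = p ++ Step.D :: q

/-- Left contraction: delete an `E` step together with the most recent preceding `N` step
whose initial point has the same `horizNu` statistic as the initial point of the `E` step,
shift the intermediate subpath, and place a `D` step at the initial point of the `N` step. -/
def LeftC (ν μ lam : List Step) : Prop :=
  ∃ p m q, μ = p ++ Step.N :: (m ++ Step.E :: q) ∧ lam = p ++ Step.D :: (m ++ q) ∧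
    horizNu ν (eLen p) (nLen p)
      = horizNu ν (eLen (p ++ Step.N :: m)) (nLen (p ++ Step.N :: m)) ∧
    noNAt ν (horizNu ν (eLen (p ++ Step.N :: m)) (nLen (p ++ Step.N :: m)))
      m (eLen p) (nLen p + 1)

/-- Diagonal contraction: delete an `E` step ending at the initial point `r` of a `D` step,
together with the most recent preceding `N` step whose initial point `s` satisfies
`horizNu s = horizNu r`, shift the intermediate subpath, and place a `D` step at `s`. -/
def DiagC (ν μ lam : List Step) : Prop :=
  ∃ p m q, μ = p ++ Step.N :: (m ++ Step.E :: Step.D :: q) ∧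
    lam = p ++ Step.D :: (m ++ Step.D :: q) ∧
    horizNu ν (eLen p) (nLen p)
      = horizNu ν (eLen (p ++ Step.N :: m) + 1) (nLen (p ++ Step.N :: m)) ∧
    noNAt ν (horizNu ν (eLen (p ++ Step.N :: m) + 1) (nLen (p ++ Step.N :: m)))
      m (eLen p) (nLen p + 1)

/-- Cover relation of the contraction poset of ν-Schröder paths. -/
def Covers (ν μ lam : List Step) : Prop :=
  IsSmallSchroder ν μ ∧ IsSmallSchroder ν lam ∧
    (RightC μ lam ∨ LeftC ν μ lam ∨ DiagC ν μ lam)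

/-- The Morse matching: `σ` (having a `D` step preceded by no valley) is matched with the
path `π` obtained by replacing the first such `D` step by `EN`. -/
def MorseM (ν : List Step) : Set (List Step × List Step) :=
  { z | ∃ p q, Step.D ∉ p ∧ valleys p = 0 ∧
      z.2 = p ++ Step.D :: q ∧ z.1 = p ++ Step.E :: Step.N :: q ∧ IsSmallSchroder ν z.2 }

/-- Twice the area between a small ν-Schröder path and `ν`. -/
def area2 (ν π : List Step) : ℕ :=
  ∑ x ∈ Finset.range (eLen ν), (colVal π x - colVal ν x)

/-- An `(I,J̄)`-forest: increasing, non-crossing arcs. -/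
def IsIJForest (I J : Finset ℕ) (F : Finset (ℕ × ℕ)) : Prop :=
  (∀ a ∈ F, a.1 ∈ I ∧ a.2 ∈ J ∧ a.1 < a.2) ∧
    (∀ a ∈ F, ∀ a' ∈ F, ¬(a.1 < a'.1 ∧ a'.1 < a.2 ∧ a.2 < a'.2))

/-- A covering `(I,J̄)`-forest: contains the arc `(1,n)` and has no isolated node. -/
def IsCoveringForest (n : ℕ) (I J : Finset ℕ) (F : Finset (ℕ × ℕ)) : Prop :=
  IsIJForest I J F ∧ (1, n) ∈ F ∧
    (∀ i ∈ I, ∃ a ∈ F, a.1 = i) ∧ (∀ j ∈ J, ∃ a ∈ F, a.2 = j)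

/-- The lattice path read off from the interleaving of `I` and `J̄` (elements `2,…,n-1`,
`E` for elements of `I`, `N` for the others). -/
def nuOf (n : ℕ) (I : Finset ℕ) : List Step :=
  (List.range' 2 (n - 2)).map (fun k => if k ∈ I then Step.E else Step.N)

/-!
A lattice path is either `Nⁿ` or `ν = β E Nᵏ`; let `g` be the height of `β`. A Schröder path
above `ν` ends as `l s Nʲ` with `s ∈ {E, D}`, where `l` is a Schröder path above `β Nⁱ` for
`i = nLen l - g`, and `(i, s)` determines `j`. A Schröder tree over `ν` meets the last column in
the segment from height `g` to some `M`, and its other points avoid the rows `g, …, M - 1`; let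
`d = 1` if they avoid row `M` as well and `d = 0` otherwise. Deleting the `M + d - g` rows from
`g` up leaves a Schröder tree over `β Nⁱ` with `i = g + k - M - d`, so `d` plays the role of the
diagonal step. Hence trees and paths over `ν` are the same disjoint union, over the pairs `(i, d)`
with `i + d ≤ k`, of trees and paths over the shorter paths `β Nⁱ`, and induction on the length of
`ν` gives the bijection; over `Nⁿ` both sides are singletons.
-/

open Step List

lemma List.replicate_append_cons_inj {α : Type*} {a s s' : α} {j j' : ℕ} {t t' : List α}
    (hs : s ≠ a) (hs' : s' ≠ a) (h : replicate j a ++ s :: t = replicate j' a ++ s' :: t') :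
    j = j' ∧ s = s' ∧ t = t' := by
  induction j generalizing j' with
  | zero =>
    cases j' with
    | zero => simpa using h
    | succ j' => exact absurd (cons_eq_cons.mp h).1 hs
  | succ j ih =>
    cases j' with
    | zero => exact absurd (cons_eq_cons.mp h).1.symm hs'
    | succ j' =>
      obtain ⟨rfl, rfl, rfl⟩ := ih (cons_eq_cons.mp h).2
      exact ⟨rfl, rfl, rfl⟩

lemma List.append_cons_replicate_inj {α : Type*} {a s s' : α} {j j' : ℕ} {l l' : List α}
    (hs : s ≠ a) (hs' : s' ≠ a) (h : l ++ s :: replicate j a = l' ++ s' :: replicate j' a) :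
    l = l' ∧ s = s' ∧ j = j' := by
  have := congrArg reverse h
  simp only [reverse_append, reverse_cons, reverse_replicate, append_assoc,
    singleton_append] at this
  obtain ⟨rfl, rfl, hl⟩ := replicate_append_cons_inj hs hs' this
  exact ⟨reverse_injective hl, rfl, rfl⟩

noncomputable def sigmaSubtypeEquivOfGlue {ι α γ : Type*} {P : ι → α → Prop} {Q : γ → Prop}
    (glue : ι → α → γ) (hglue : ∀ x a, P x a → Q (glue x a))
    (hinj : ∀ x a y b, P x a → P y b → glue x a = glue y b → x = y ∧ a = b)
    (hsurj : ∀ c, Q c → ∃ x a, P x a ∧ glue x a = c) :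
    (Σ x, {a // P x a}) ≃ {c // Q c} :=
  Equiv.ofBijective (fun z => ⟨glue z.1 z.2, hglue _ _ z.2.2⟩) <| by
    refine ⟨fun ⟨x, a, ha⟩ ⟨y, b, hb⟩ h => ?_, fun ⟨c, hc⟩ => ?_⟩
    · obtain ⟨rfl, rfl⟩ := hinj x a y b ha hb (congrArg Subtype.val h)
      rfl
    · obtain ⟨x, a, ha, rfl⟩ := hsurj c hc
      exact ⟨⟨x, a, ha⟩, rfl⟩

section PathStatistics

@[simp] lemma eLen_nil : eLen [] = 0 := rfl

@[simp] lemma nLen_nil : nLen [] = 0 := rfl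

@[simp] lemma eLen_cons_N (l : List Step) : eLen (N :: l) = eLen l := by simp [eLen]

@[simp] lemma eLen_cons_E (l : List Step) : eLen (E :: l) = eLen l + 1 := by
  simp [eLen, Nat.add_right_comm]

@[simp] lemma eLen_cons_D (l : List Step) : eLen (D :: l) = eLen l + 1 := by
  simp [eLen, ← add_assoc]

@[simp] lemma nLen_cons_N (l : List Step) : nLen (N :: l) = nLen l + 1 := by
  simp [nLen, Nat.add_right_comm]

@[simp] lemma nLen_cons_E (l : List Step) : nLen (E :: l) = nLen l := by simp [nLen]

@[simp] lemma nLen_cons_D (l : List Step) : nLen (D :: l) = nLen l + 1 := by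
  simp [nLen, ← add_assoc]

@[simp] lemma eLen_append (l r : List Step) : eLen (l ++ r) = eLen l + eLen r := by
  simp only [eLen, count_append]; omega

@[simp] lemma nLen_append (l r : List Step) : nLen (l ++ r) = nLen l + nLen r := by
  simp only [nLen, count_append]; omega

@[simp] lemma eLen_replicate_N (n : ℕ) : eLen (replicate n N) = 0 := by
  simp [eLen, count_replicate]

@[simp] lemma nLen_replicate_N (n : ℕ) : nLen (replicate n N) = n := by
  simp [nLen, count_replicate]

lemma eq_replicate_of_eLen_eq_zero {π : List Step} (h : eLen π = 0) :
    π = replicate (nLen π) N := by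
  induction π with
  | nil => rfl
  | cons s l ih =>
    cases s
    · rw [eLen_cons_N] at h
      conv_lhs => rw [ih h]
      simp [replicate_succ]
    all_goals simp at h

@[simp] lemma colVal_replicate_N (n x : ℕ) : colVal (replicate n N) x = 2 * n := by
  induction n with
  | zero => rfl
  | succ n ih => rw [replicate_succ, colVal, ih]; ring

lemma colVal_append_of_lt {l : List Step} {x : ℕ} (r : List Step) (h : x < eLen l) :
    colVal (l ++ r) x = colVal l x := by
  induction l generalizing x with
  | nil => simp at h
  | cons s l ih =>
    cases s <;> cases x <;> simp_all [colVal]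

lemma colVal_append_eLen_add (l r : List Step) (x : ℕ) :
    colVal (l ++ r) (eLen l + x) = 2 * nLen l + colVal r x := by
  induction l with
  | nil => simp
  | cons s l ih =>
    cases s <;>
      simp only [cons_append, eLen_cons_N, eLen_cons_E, eLen_cons_D, nLen_cons_N, nLen_cons_E,
        nLen_cons_D, add_right_comm _ 1 x, colVal, ih] <;>
      ring

lemma colVal_of_eLen_le {l : List Step} {x : ℕ} (h : eLen l ≤ x) : colVal l x = 2 * nLen l := by
  obtain ⟨y, rfl⟩ := Nat.exists_eq_add_of_le h
  simpa [colVal] using colVal_append_eLen_add l [] y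

lemma lowH_le_nLen (l : List Step) (x : ℕ) : lowH l x ≤ nLen l := by
  induction l generalizing x with
  | nil => cases x <;> simp [lowH]
  | cons s l ih =>
    rcases x with _ | x
    · simp [lowH]
    · cases s
      · simpa [lowH] using ih (x + 1)
      · simpa [lowH] using ih x
      · simpa [lowH] using ih x

lemma lowH_append_of_le {l : List Step} {x : ℕ} (r : List Step) (h : x ≤ eLen l) :
    lowH (l ++ r) x = lowH l x := by
  induction l generalizing x with
  | nil =>
    obtain rfl : x = 0 := by simpa using h
    simp [lowH]
  | cons s l ih =>
    rcases x with _ | x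
    · simp [lowH]
    · cases s <;> simp_all [lowH]

lemma lowH_append_E (l r : List Step) : lowH (l ++ E :: r) (eLen l + 1) = nLen l := by
  induction l with
  | nil => simp [lowH]
  | cons s l ih => cases s <;> simp_all [lowH]

end PathStatistics

lemma IsLatticePath.eq_replicate_or_eq_append_E {ν : List Step} (hν : IsLatticePath ν) :
    ν = replicate ν.length N ∨ ∃ β k, ν = β ++ E :: replicate k N := by
  induction ν using reverseRecOn with
  | nil => exact Or.inl rfl
  | append_singleton l s ih =>
    have hl : IsLatticePath l := fun h => hν (mem_append_left _ h)
    cases s with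
    | N =>
      rcases ih hl with h | ⟨β, k, h⟩
      · left
        rw [length_append, length_singleton, replicate_succ', ← h]
      · right
        exact ⟨β, k + 1, by simp [h, replicate_succ']⟩
    | E => exact Or.inr ⟨l, 0, rfl⟩
    | D => exact absurd (mem_append_right _ (mem_singleton_self _)) hν

@[elab_as_elim]
theorem IsLatticePath.induction {P : List Step → Prop} (base : ∀ n, P (replicate n N))
    (step : ∀ β k, (∀ i ≤ k, P (β ++ replicate i N)) → P (β ++ E :: replicate k N))
    (ν : List Step) (hν : IsLatticePath ν) : P ν := by
  induction h : ν.length using Nat.strong_induction_on generalizing ν with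
  | _ n ih =>
    rcases hν.eq_replicate_or_eq_append_E with hrep | ⟨β, k, rfl⟩
    · rw [hrep]; exact base _
    · refine step β k fun i hi => ih _ ?_ _ ?_ rfl
      · simp only [length_append, length_cons, length_replicate] at h ⊢
        omega
      · simp only [IsLatticePath, mem_append, mem_cons, mem_replicate] at hν ⊢
        tauto

section SchroderPaths

def lastStep : Bool → Step
  | false => E
  | true => D

lemma lastStep_ne_N (d : Bool) : lastStep d ≠ N := by cases d <;> simp [lastStep]

lemma lastStep_injective : Function.Injective lastStep := by
  intro d d' h; cases d <;> cases d' <;> simp_all [lastStep]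

@[simp] lemma eLen_lastStep_cons (d : Bool) (r : List Step) :
    eLen (lastStep d :: r) = eLen r + 1 := by
  cases d <;> simp [lastStep]

@[simp] lemma nLen_lastStep_cons (d : Bool) (r : List Step) :
    nLen (lastStep d :: r) = nLen r + d.toNat := by
  cases d <;> simp [lastStep]

@[simp] lemma colVal_lastStep_cons_zero (d : Bool) (r : List Step) :
    colVal (lastStep d :: r) 0 = d.toNat := by
  cases d <;> rfl

@[simp] lemma colVal_lastStep_cons_succ (d : Bool) (r : List Step) (x : ℕ) :
    colVal (lastStep d :: r) (x + 1) = colVal r x + 2 * d.toNat := by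
  cases d <;> simp [lastStep, colVal]

lemma exists_eq_append_lastStep {π : List Step} (h : eLen π ≠ 0) :
    ∃ l d j, π = l ++ lastStep d :: replicate j N := by
  induction π using reverseRecOn with
  | nil => simp at h
  | append_singleton l s ih =>
    cases s with
    | N =>
      obtain ⟨l', d, j, rfl⟩ := ih (by simpa using h)
      exact ⟨l', d, j + 1, by simp [replicate_succ']⟩
    | E => exact ⟨l, false, 0, rfl⟩
    | D => exact ⟨l, true, 0, rfl⟩

lemma append_lastStep_inj {l l' : List Step} {d d' : Bool} {j j' : ℕ}
    (h : l ++ lastStep d :: replicate j N = l' ++ lastStep d' :: replicate j' N) :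
    l = l' ∧ d = d' ∧ j = j' := by
  obtain ⟨hl, hd, hj⟩ := append_cons_replicate_inj (lastStep_ne_N d) (lastStep_ne_N d') h
  exact ⟨hl, lastStep_injective hd, hj⟩

lemma isSmallSchroder_append_replicate_iff {β l : List Step} {i : ℕ} :
    IsSmallSchroder (β ++ replicate i N) l ↔
      eLen l = eLen β ∧ nLen l = nLen β + i ∧ ∀ x < eLen β, colVal β x ≤ colVal l x := by
  simp only [IsSmallSchroder, WeaklyAbove, eLen_append, nLen_append, eLen_replicate_N,
    nLen_replicate_N, add_zero]
  refine and_congr_right fun he => and_congr_right fun hn => ⟨fun h x hx => ?_, fun h x => ?_⟩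
  · simpa [colVal_append_of_lt _ hx] using h x
  · rcases lt_or_ge x (eLen β) with hx | hx
    · simpa [colVal_append_of_lt _ hx] using h x hx
    · obtain ⟨y, rfl⟩ := Nat.exists_eq_add_of_le hx
      rw [colVal_append_eLen_add, colVal_replicate_N, colVal_of_eLen_le (l := l) (by omega)]
      omega

lemma isSmallSchroder_append_E_replicate_iff {β l : List Step} {k j : ℕ} {d : Bool}
    (hl : eLen l = eLen β) :
    IsSmallSchroder (β ++ E :: replicate k N) (l ++ lastStep d :: replicate j N) ↔
      nLen β ≤ nLen l ∧ nLen l + d.toNat + j = nLen β + k ∧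
        ∀ x < eLen β, colVal β x ≤ colVal l x := by
  simp only [IsSmallSchroder, eLen_append, hl, eLen_lastStep_cons, eLen_replicate_N, zero_add,
    eLen_cons_E, nLen_append, nLen_lastStep_cons, nLen_replicate_N, nLen_cons_E, WeaklyAbove,
    true_and]
  have := d.toNat_le
  have last_cols : ∀ y, colVal (β ++ E :: replicate k N) (eLen β + y) ≤
      colVal (l ++ lastStep d :: replicate j N) (eLen β + y) ↔
        2 * nLen β + colVal (E :: replicate k N) y ≤
          2 * nLen l + colVal (lastStep d :: replicate j N) y := by
    intro y
    rw [colVal_append_eLen_add, ← hl, colVal_append_eLen_add]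
  constructor
  · rintro ⟨hn, h⟩
    refine ⟨?_, by omega, fun x hx => ?_⟩
    · have := (last_cols 0).1 (h _)
      simp only [colVal, add_zero, colVal_lastStep_cons_zero] at this
      omega
    · simpa [colVal_append_of_lt _ hx, colVal_append_of_lt _ (hl ▸ hx)] using h x
  · rintro ⟨hg, hn, h⟩
    refine ⟨by omega, fun x => ?_⟩
    rcases lt_or_ge x (eLen β) with hx | hx
    · simpa [colVal_append_of_lt _ hx, colVal_append_of_lt _ (hl ▸ hx)] using h x hx
    obtain ⟨_ | y, rfl⟩ := Nat.exists_eq_add_of_le hx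
    all_goals
      rw [last_cols]
      simp only [colVal, add_zero, colVal_replicate_N, colVal_lastStep_cons_zero,
        colVal_lastStep_cons_succ]
      omega

lemma isSmallSchroder_gluePath {β l : List Step} {k i : ℕ} {d : Bool} (hid : i + d.toNat ≤ k)
    (hl : IsSmallSchroder (β ++ replicate i N) l) :
    IsSmallSchroder (β ++ E :: replicate k N)
      (l ++ lastStep d :: replicate (k - i - d.toNat) N) := by
  obtain ⟨he, hn, h⟩ := isSmallSchroder_append_replicate_iff.1 hl
  exact (isSmallSchroder_append_E_replicate_iff he).2 ⟨by omega, by omega, h⟩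

lemma gluePath_inj {β l l' : List Step} {k i i' : ℕ} {d d' : Bool}
    (hl : IsSmallSchroder (β ++ replicate i N) l) (hl' : IsSmallSchroder (β ++ replicate i' N) l')
    (h : l ++ lastStep d :: replicate (k - i - d.toNat) N =
      l' ++ lastStep d' :: replicate (k - i' - d'.toNat) N) :
    i = i' ∧ d = d' ∧ l = l' := by
  obtain ⟨rfl, rfl, -⟩ := append_lastStep_inj h
  have := (isSmallSchroder_append_replicate_iff.1 hl).2.1
  have := (isSmallSchroder_append_replicate_iff.1 hl').2.1
  exact ⟨by omega, rfl, rfl⟩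

lemma exists_gluePath_eq {β π : List Step} {k : ℕ}
    (hπ : IsSmallSchroder (β ++ E :: replicate k N) π) :
    ∃ i d l, i + d.toNat ≤ k ∧ IsSmallSchroder (β ++ replicate i N) l ∧
      l ++ lastStep d :: replicate (k - i - d.toNat) N = π := by
  obtain ⟨l, d, j, rfl⟩ := exists_eq_append_lastStep (π := π) (by simp [hπ.1])
  have he : eLen l = eLen β := by simpa using hπ.1
  obtain ⟨hg, hn, h⟩ := (isSmallSchroder_append_E_replicate_iff he).1 hπ
  refine ⟨nLen l - nLen β, d, l, by omega,
    isSmallSchroder_append_replicate_iff.2 ⟨he, by omega, h⟩, ?_⟩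
  congr 3
  omega

end SchroderPaths

section SchroderTrees

variable {β : List Step} {k i : ℕ}

lemma inRegion_append_replicate_iff {p : ℕ × ℕ} :
    InRegion (β ++ replicate i N) p ↔ p.1 ≤ eLen β ∧ p.2 ≤ nLen β + i ∧ lowH β p.1 ≤ p.2 := by
  simp only [InRegion, eLen_append, nLen_append, eLen_replicate_N, nLen_replicate_N, add_zero]
  exact and_congr_right fun h => by rw [lowH_append_of_le _ h]

lemma inRegion_append_E_replicate_iff {p : ℕ × ℕ} :
    InRegion (β ++ E :: replicate k N) p ↔ p.2 ≤ nLen β + k ∧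
      (p.1 ≤ eLen β ∧ lowH β p.1 ≤ p.2 ∨ p.1 = eLen β + 1 ∧ nLen β ≤ p.2) := by
  obtain ⟨x, y⟩ := p
  simp only [InRegion, eLen_append, nLen_append, eLen_cons_E, nLen_cons_E, eLen_replicate_N,
    nLen_replicate_N, zero_add]
  constructor
  · rintro ⟨hx, hy, hlow⟩
    refine ⟨hy, ?_⟩
    rcases Nat.lt_or_eq_of_le hx with hx | rfl
    · exact Or.inl ⟨by omega, by rwa [lowH_append_of_le _ (by omega)] at hlow⟩
    · exact Or.inr ⟨rfl, by rwa [lowH_append_E] at hlow⟩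
  · rintro ⟨hy, ⟨hx, hlow⟩ | ⟨rfl, hlow⟩⟩
    · exact ⟨by omega, hy, by rwa [lowH_append_of_le _ hx]⟩
    · exact ⟨le_rfl, hy, by rwa [lowH_append_E]⟩

lemma incompat_comm {ν : List Step} {p q : ℕ × ℕ} : Incompat ν p q ↔ Incompat ν q p := by
  simp only [Incompat, or_comm, max_comm, min_comm]

def liftRow (g c y : ℕ) : ℕ := if y < g then y else y + c

lemma liftRow_strictMono (g c : ℕ) : StrictMono (liftRow g c) := by
  intro y y' h
  simp only [liftRow]
  split_ifs <;> omega

lemma liftRow_of_le {g c y : ℕ} (h : g ≤ y) : liftRow g c y = y + c := if_neg (by omega)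

lemma exists_liftRow_eq {g c y : ℕ} (h : y < g ∨ g + c ≤ y) : ∃ z, liftRow g c z = y := by
  rcases h with h | h
  · exact ⟨y, if_pos h⟩
  · exact ⟨y - c, by simp only [liftRow]; split_ifs <;> omega⟩

lemma inRegion_lift_iff (hi : i ≤ k) {q : ℕ × ℕ} (hq : q.1 ≤ eLen β) :
    InRegion (β ++ E :: replicate k N) (Prod.map id (liftRow (nLen β) (k - i)) q) ↔
      InRegion (β ++ replicate i N) q := by
  rw [inRegion_append_E_replicate_iff, inRegion_append_replicate_iff]
  have := lowH_le_nLen β q.1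
  simp only [Prod.map_fst, Prod.map_snd, id, liftRow]
  split_ifs <;> omega

lemma incompat_lift_iff (hi : i ≤ k) {q r : ℕ × ℕ} (hq : q.1 ≤ eLen β) (hr : r.1 ≤ eLen β) :
    Incompat (β ++ E :: replicate k N) (Prod.map id (liftRow (nLen β) (k - i)) q)
      (Prod.map id (liftRow (nLen β) (k - i)) r) ↔ Incompat (β ++ replicate i N) q r := by
  have hmono := liftRow_strictMono (nLen β) (k - i)
  simp only [Incompat, Prod.map_fst, Prod.map_snd, id, hmono.lt_iff_lt,
    ← hmono.monotone.map_min]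
  exact and_congr_right fun _ => inRegion_lift_iff (q := (max q.1 r.1, min q.2 r.2)) hi
    (max_le hq hr)

lemma IsSchroderTree.fst_le {T : Finset (ℕ × ℕ)} (hT : IsSchroderTree (β ++ replicate i N) T)
    {q : ℕ × ℕ} (hq : q ∈ T) : q.1 ≤ eLen β :=
  (inRegion_append_replicate_iff.1 (hT.1 q hq)).1

def glueTree (β : List Step) (k i : ℕ) (d : Bool) (T : Finset (ℕ × ℕ)) : Finset (ℕ × ℕ) :=
  T.image (Prod.map id (liftRow (nLen β) (k - i))) ∪
    {eLen β + 1} ×ˢ Finset.Icc (nLen β) (nLen β + k - i - d.toNat)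

variable {d : Bool} {T : Finset (ℕ × ℕ)}

lemma mem_glueTree {p : ℕ × ℕ} : p ∈ glueTree β k i d T ↔
    (∃ q ∈ T, Prod.map id (liftRow (nLen β) (k - i)) q = p) ∨
      p.1 = eLen β + 1 ∧ nLen β ≤ p.2 ∧ p.2 ≤ nLen β + k - i - d.toNat := by
  simp only [glueTree, Finset.mem_union, Finset.mem_image, Finset.mem_product,
    Finset.mem_singleton, Finset.mem_Icc]

lemma lift_mem_glueTree_iff {q : ℕ × ℕ} (hq : q.1 ≤ eLen β) :
    Prod.map id (liftRow (nLen β) (k - i)) q ∈ glueTree β k i d T ↔ q ∈ T := by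
  have hinj := (liftRow_strictMono (nLen β) (k - i)).injective
  rw [mem_glueTree]
  constructor
  · rintro (⟨q', hq', h⟩ | ⟨h, -⟩)
    · rwa [← (Function.injective_id.prodMap hinj) h]
    · simp only [Prod.map_fst, id_eq] at h
      omega
  · exact fun h => Or.inl ⟨q, h, rfl⟩

lemma mem_glueTree_lastCol_iff (hT : ∀ q ∈ T, q.1 ≤ eLen β) (y : ℕ) :
    (eLen β + 1, y) ∈ glueTree β k i d T ↔ nLen β ≤ y ∧ y ≤ nLen β + k - i - d.toNat := by
  rw [mem_glueTree]
  constructor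
  · rintro (⟨q, hq, h⟩ | ⟨-, h⟩)
    · have := congrArg Prod.fst h
      simp only [Prod.map_fst, id_eq] at this
      have := hT q hq
      omega
    · exact h
  · exact fun h => Or.inr ⟨rfl, h⟩

lemma not_incompat_lift_lastCol {q : ℕ × ℕ} (hq : q.1 ≤ eLen β) {y : ℕ}
    (hy : y ≤ nLen β + k - i) :
    ¬ Incompat (β ++ E :: replicate k N) (Prod.map id (liftRow (nLen β) (k - i)) q)
      (eLen β + 1, y) := by
  rintro ⟨hlt, hreg⟩
  rw [inRegion_append_E_replicate_iff] at hreg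
  simp only [Prod.map_fst, Prod.map_snd, id, liftRow] at hlt hreg
  split_ifs at hlt hreg <;> omega

lemma not_incompat_of_mem_glueTree (hi : i ≤ k) (hT : IsSchroderTree (β ++ replicate i N) T)
    {p p' : ℕ × ℕ} (hp : p ∈ glueTree β k i d T) (hp' : p' ∈ glueTree β k i d T) :
    ¬ Incompat (β ++ E :: replicate k N) p p' := by
  rcases mem_glueTree.1 hp with ⟨q, hq, rfl⟩ | ⟨hx, hy⟩ <;>
    rcases mem_glueTree.1 hp' with ⟨q', hq', rfl⟩ | ⟨hx', hy'⟩
  · rw [incompat_lift_iff hi (hT.fst_le hq) (hT.fst_le hq')]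
    exact hT.2.1 q hq q' hq'
  · obtain ⟨x', y'⟩ := p'
    obtain rfl : x' = eLen β + 1 := hx'
    exact not_incompat_lift_lastCol (hT.fst_le hq) (by omega)
  · obtain ⟨x, y⟩ := p
    obtain rfl : x = eLen β + 1 := hx
    rw [incompat_comm]
    exact not_incompat_lift_lastCol (hT.fst_le hq') (by omega)
  · rintro ⟨hlt, -⟩
    omega

lemma isSchroderTree_glueTree (hid : i + d.toNat ≤ k)
    (hT : IsSchroderTree (β ++ replicate i N) T) :
    IsSchroderTree (β ++ E :: replicate k N) (glueTree β k i d T) := by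
  have hfst : ∀ q ∈ T, q.1 ≤ eLen β := fun q hq => hT.fst_le hq
  have := d.toNat_le
  have hcompat (p) (hp : p ∈ glueTree β k i d T) (p') (hp' : p' ∈ glueTree β k i d T) :=
    not_incompat_of_mem_glueTree (by omega) hT hp hp'
  obtain ⟨hreg, -, hroot, hrows, hcols⟩ := hT
  simp only [IsSchroderTree, nLen_append, eLen_append, nLen_replicate_N, eLen_replicate_N,
    nLen_cons_E, eLen_cons_E, add_zero, zero_add] at hroot hrows hcols ⊢
  refine ⟨fun p hp => ?_, hcompat, ?_, fun y hy => ?_, fun x hx => ?_⟩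
  · rcases mem_glueTree.1 hp with ⟨q, hq, rfl⟩ | ⟨hx, hy⟩
    · exact (inRegion_lift_iff (by omega) (hfst q hq)).2 (hreg q hq)
    · rw [inRegion_append_E_replicate_iff]
      omega
  · refine mem_glueTree.2 (Or.inl ⟨(0, nLen β + i), hroot, ?_⟩)
    simp only [Prod.map, id, liftRow_of_le (Nat.le_add_right _ _)]
    congr 1
    omega
  · by_cases hcol : nLen β ≤ y ∧ y ≤ nLen β + k - i - d.toNat
    · exact ⟨(eLen β + 1, y), mem_glueTree.2 (Or.inr ⟨rfl, hcol⟩), rfl⟩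
    obtain ⟨z, rfl⟩ := exists_liftRow_eq (g := nLen β) (c := k - i) (y := y) (by omega)
    obtain ⟨q, hq, rfl⟩ := hrows z (by simp only [liftRow] at hy; split_ifs at hy <;> omega)
    exact ⟨_, mem_glueTree.2 (Or.inl ⟨q, hq, rfl⟩), rfl⟩
  · rcases Nat.lt_or_eq_of_le hx with hx | rfl
    · obtain ⟨q, hq, rfl⟩ := hcols x (by omega)
      exact ⟨_, mem_glueTree.2 (Or.inl ⟨q, hq, rfl⟩), rfl⟩
    · exact ⟨(eLen β + 1, nLen β), mem_glueTree.2 (Or.inr ⟨rfl, le_rfl, by omega⟩), rfl⟩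

lemma exists_mem_glueTree_top_iff (hid : i + d.toNat ≤ k)
    (hT : IsSchroderTree (β ++ replicate i N) T) :
    (∃ p ∈ glueTree β k i d T, p.1 ≤ eLen β ∧ p.2 = nLen β + k - i - d.toNat) ↔ d = false := by
  constructor
  · rintro ⟨p, hp, hx, hy⟩
    rcases mem_glueTree.1 hp with ⟨q, -, rfl⟩ | ⟨hx', -⟩
    · cases d
      · rfl
      · simp only [Prod.map_snd, liftRow, Bool.toNat_true] at hy hid
        split_ifs at hy <;> omega
    · omega
  · rintro rfl
    obtain ⟨q, hq, hqy⟩ := hT.2.2.2.1 (nLen β) (by simp)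
    refine ⟨_, mem_glueTree.2 (Or.inl ⟨q, hq, rfl⟩), (hT.fst_le hq : q.1 ≤ _), ?_⟩
    simp only [Prod.map_snd, hqy, liftRow_of_le le_rfl, Bool.toNat_false]
    omega

lemma glueTree_inj {i' : ℕ} {d' : Bool} {T' : Finset (ℕ × ℕ)} (hid : i + d.toNat ≤ k)
    (hid' : i' + d'.toNat ≤ k) (hT : IsSchroderTree (β ++ replicate i N) T)
    (hT' : IsSchroderTree (β ++ replicate i' N) T')
    (h : glueTree β k i d T = glueTree β k i' d' T') :
    i = i' ∧ d = d' ∧ T = T' := by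
  have hcol := mem_glueTree_lastCol_iff (k := k) (i := i) (d := d) fun _ => hT.fst_le
  have hcol' := mem_glueTree_lastCol_iff (k := k) (i := i') (d := d') fun _ => hT'.fst_le
  rw [h] at hcol
  have htop : nLen β + k - i - d.toNat = nLen β + k - i' - d'.toNat := by
    have h1 := (hcol' _).1 ((hcol _).2 ⟨by omega, le_rfl⟩)
    have h2 := (hcol _).1 ((hcol' _).2 ⟨by omega, le_rfl⟩)
    omega
  have hd : d = d' := by
    have := exists_mem_glueTree_top_iff hid hT
    rw [h, htop, exists_mem_glueTree_top_iff hid' hT'] at this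
    cases d <;> cases d' <;> simp_all
  subst hd
  obtain rfl : i = i' := by omega
  refine ⟨rfl, rfl, Finset.ext fun q => ?_⟩
  by_cases hq : q.1 ≤ eLen β
  · rw [← lift_mem_glueTree_iff (k := k) (d := d) hq, h, lift_mem_glueTree_iff hq]
  · exact iff_of_false (fun h => hq (hT.fst_le h)) (fun h => hq (hT'.fst_le h))

lemma IsSchroderTree.exists_lastCol {U : Finset (ℕ × ℕ)}
    (hU : IsSchroderTree (β ++ E :: replicate k N) U) :
    ∃ M, nLen β ≤ M ∧ M ≤ nLen β + k ∧ (∀ y, (eLen β + 1, y) ∈ U ↔ nLen β ≤ y ∧ y ≤ M) ∧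
      ∀ p ∈ U, p.1 ≤ eLen β → p.2 < nLen β ∨ M ≤ p.2 := by
  obtain ⟨hreg, hcompat, -, hrows, hcols⟩ := hU
  simp only [nLen_append, eLen_append, nLen_replicate_N, eLen_replicate_N, nLen_cons_E,
    eLen_cons_E, zero_add] at hrows hcols
  replace hreg := fun p hp => inRegion_append_E_replicate_iff.1 (hreg p hp)
  obtain ⟨⟨x, M⟩, htop, hmax⟩ := (U.filter (·.1 = eLen β + 1)).exists_max_image Prod.snd <| by
    obtain ⟨p, hp, hx⟩ := hcols (eLen β + 1) le_rfl
    exact ⟨p, Finset.mem_filter.2 ⟨hp, hx⟩⟩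
  obtain ⟨htop, rfl : x = eLen β + 1⟩ := Finset.mem_filter.1 htop
  have hM := hreg _ htop
  have hgap : ∀ p ∈ U, p.1 ≤ eLen β → p.2 < nLen β ∨ M ≤ p.2 := by
    intro p hp hx
    by_contra hcon
    refine hcompat p hp _ htop ⟨Or.inl ⟨by simp only; omega, by simp only; omega⟩, ?_⟩
    rw [inRegion_append_E_replicate_iff]
    simp only
    omega
  refine ⟨M, by omega, hM.1, fun y => ⟨fun hy => ?_, fun hy => ?_⟩, hgap⟩
  · have := hreg _ hy
    exact ⟨by omega, hmax _ (Finset.mem_filter.2 ⟨hy, rfl⟩)⟩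
  · obtain ⟨⟨x, y⟩, hp, rfl⟩ := hrows y (by omega)
    rcases (hreg _ hp).2 with ⟨hx, -⟩ | ⟨rfl, -⟩
    · obtain rfl : y = M := by have := hgap _ hp hx; simp only at this hy; omega
      exact htop
    · exact hp

noncomputable def cutTree (β : List Step) (k i : ℕ) (U : Finset (ℕ × ℕ)) : Finset (ℕ × ℕ) :=
  (U.preimage (Prod.map id (liftRow (nLen β) (k - i)))
    (Function.injective_id.prodMap (liftRow_strictMono _ _).injective).injOn).filter
      (·.1 ≤ eLen β)

variable {U : Finset (ℕ × ℕ)}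

lemma mem_cutTree {q : ℕ × ℕ} :
    q ∈ cutTree β k i U ↔ Prod.map id (liftRow (nLen β) (k - i)) q ∈ U ∧ q.1 ≤ eLen β := by
  simp [cutTree]

lemma exists_mem_cutTree_lift_eq {p : ℕ × ℕ} (hp : p ∈ U) (hx : p.1 ≤ eLen β)
    (hgap : p.2 < nLen β ∨ nLen β + (k - i) ≤ p.2) :
    ∃ q ∈ cutTree β k i U, Prod.map id (liftRow (nLen β) (k - i)) q = p := by
  obtain ⟨z, hz⟩ := exists_liftRow_eq hgap
  have hlift : Prod.map id (liftRow (nLen β) (k - i)) (p.1, z) = p := by simp [hz]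
  exact ⟨(p.1, z), mem_cutTree.2 ⟨hlift ▸ hp, hx⟩, hlift⟩

lemma isSchroderTree_cutTree (hU : IsSchroderTree (β ++ E :: replicate k N) U) (hi : i ≤ k)
    (hgap : ∀ p ∈ U, p.1 ≤ eLen β → p.2 < nLen β ∨ nLen β + (k - i) ≤ p.2)
    (hrows : ∀ y ≤ nLen β + k, y < nLen β ∨ nLen β + (k - i) ≤ y →
      ∃ p ∈ U, p.1 ≤ eLen β ∧ p.2 = y) :
    IsSchroderTree (β ++ replicate i N) (cutTree β k i U) := by
  obtain ⟨hreg, hcompat, hroot, -, hcols⟩ := hU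
  simp only [IsSchroderTree, nLen_append, eLen_append, nLen_replicate_N, eLen_replicate_N,
    nLen_cons_E, eLen_cons_E, add_zero, zero_add] at hroot hcols ⊢
  refine ⟨fun q hq => ?_, fun q hq r hr => ?_, ?_, fun y hy => ?_, fun x hx => ?_⟩
  · obtain ⟨hqU, hx⟩ := mem_cutTree.1 hq
    exact (inRegion_lift_iff hi hx).1 (hreg _ hqU)
  · obtain ⟨hqU, hqx⟩ := mem_cutTree.1 hq
    obtain ⟨hrU, hrx⟩ := mem_cutTree.1 hr
    rw [← incompat_lift_iff hi hqx hrx]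
    exact hcompat _ hqU _ hrU
  · refine mem_cutTree.2 ⟨?_, Nat.zero_le _⟩
    convert hroot using 1
    refine Prod.ext rfl ?_
    change liftRow _ _ _ = _
    rw [liftRow_of_le (Nat.le_add_right _ _)]
    omega
  · obtain ⟨p, hp, hx, hpy⟩ := hrows (liftRow (nLen β) (k - i) y)
      (by simp only [liftRow]; split_ifs <;> omega) (by simp only [liftRow]; split_ifs <;> omega)
    obtain ⟨q, hq, rfl⟩ := exists_mem_cutTree_lift_eq hp hx (hgap p hp hx)
    exact ⟨q, hq, (liftRow_strictMono _ _).injective hpy⟩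
  · obtain ⟨p, hp, rfl⟩ := hcols x (by omega)
    obtain ⟨q, hq, rfl⟩ := exists_mem_cutTree_lift_eq hp hx (hgap p hp hx)
    exact ⟨q, hq, rfl⟩

lemma glueTree_cutTree {d : Bool} (hU : IsSchroderTree (β ++ E :: replicate k N) U)
    (hgap : ∀ p ∈ U, p.1 ≤ eLen β → p.2 < nLen β ∨ nLen β + (k - i) ≤ p.2)
    (hcol : ∀ y, (eLen β + 1, y) ∈ U ↔ nLen β ≤ y ∧ y ≤ nLen β + k - i - d.toNat) :
    glueTree β k i d (cutTree β k i U) = U := by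
  ext ⟨x, y⟩
  rw [mem_glueTree]
  constructor
  · rintro (⟨q, hq, h⟩ | ⟨rfl, hy⟩)
    · exact h ▸ (mem_cutTree.1 hq).1
    · exact (hcol y).2 hy
  · intro hp
    rcases (inRegion_append_E_replicate_iff.1 (hU.1 _ hp)).2 with ⟨hx, -⟩ | ⟨rfl, -⟩
    · exact Or.inl (exists_mem_cutTree_lift_eq hp hx (hgap _ hp hx))
    · exact Or.inr ⟨rfl, (hcol y).1 hp⟩

lemma IsSchroderTree.exists_lastCol_diag (hU : IsSchroderTree (β ++ E :: replicate k N) U) :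
    ∃ M, ∃ d : Bool, nLen β ≤ M ∧ M + d.toNat ≤ nLen β + k ∧
      (∀ y, (eLen β + 1, y) ∈ U ↔ nLen β ≤ y ∧ y ≤ M) ∧
      (∀ p ∈ U, p.1 ≤ eLen β → p.2 < nLen β ∨ M + d.toNat ≤ p.2) ∧
      ∀ y ≤ nLen β + k, y < nLen β ∨ M + d.toNat ≤ y → ∃ p ∈ U, p.1 ≤ eLen β ∧ p.2 = y := by
  classical
  obtain ⟨M, hgM, hMk, hcol, hgap⟩ := hU.exists_lastCol
  obtain ⟨d, hd⟩ : ∃ d : Bool, d = false ↔ ∃ p ∈ U, p.1 ≤ eLen β ∧ p.2 = M :=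
    ⟨decide ¬ ∃ p ∈ U, p.1 ≤ eLen β ∧ p.2 = M, by simp⟩
  have hd1 : d = true → ∀ p ∈ U, p.1 ≤ eLen β → p.2 ≠ M := by
    rintro rfl p hp hx rfl
    exact absurd (hd.2 ⟨p, hp, hx, rfl⟩) (by simp)
  refine ⟨M, d, hgM, ?_, hcol, fun p hp hx => ?_, fun y hy hout => ?_⟩
  · cases d
    · simpa using hMk
    · have := hd1 rfl (0, nLen β + k) (by simpa using hU.2.2.1) (Nat.zero_le _)
      simp only [Bool.toNat_true]
      omega
  · rcases hgap p hp hx with h | h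
    · exact Or.inl h
    · cases d
      · simpa using Or.inr h
      · have := hd1 rfl p hp hx
        simp only [Bool.toNat_true]
        omega
  · obtain ⟨p, hp, rfl⟩ := hU.2.2.2.1 y (by simpa using hy)
    rcases (inRegion_append_E_replicate_iff.1 (hU.1 _ hp)).2 with ⟨hx, -⟩ | ⟨hx, -⟩
    · exact ⟨p, hp, hx, rfl⟩
    · have := (hcol p.2).1 (hx ▸ hp)
      have hd0 : d = false := by simpa using (show d.toNat = 0 by omega)
      obtain ⟨p', hp', hx', hp'M⟩ := hd.1 hd0
      exact ⟨p', hp', hx', by omega⟩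

lemma exists_glueTree_eq (hU : IsSchroderTree (β ++ E :: replicate k N) U) :
    ∃ i d T, i + d.toNat ≤ k ∧ IsSchroderTree (β ++ replicate i N) T ∧ glueTree β k i d T = U := by
  obtain ⟨M, d, hgM, hMd, hcol, hgap, hrows⟩ := hU.exists_lastCol_diag
  have hgap' (p) (hp : p ∈ U) (hx : p.1 ≤ eLen β) :
      p.2 < nLen β ∨ nLen β + (k - (nLen β + k - M - d.toNat)) ≤ p.2 := by
    have := hgap p hp hx
    omega
  exact ⟨nLen β + k - M - d.toNat, d, _, by omega,
    isSchroderTree_cutTree hU (by omega) hgap' fun y hy hout => hrows y hy (by omega),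
    glueTree_cutTree hU hgap' fun y => by rw [hcol]; omega⟩

end SchroderTrees

section Assembly

lemma isSmallSchroder_replicate_iff {n : ℕ} {π : List Step} :
    IsSmallSchroder (replicate n N) π ↔ π = replicate n N := by
  constructor
  · rintro ⟨he, hn, -⟩
    simp only [eLen_replicate_N, nLen_replicate_N] at he hn
    rw [eq_replicate_of_eLen_eq_zero he, hn]
  · rintro rfl
    exact ⟨rfl, rfl, fun _ => le_rfl⟩

lemma inRegion_replicate_iff {n : ℕ} {p : ℕ × ℕ} :
    InRegion (replicate n N) p ↔ p.1 = 0 ∧ p.2 ≤ n := by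
  obtain ⟨x, y⟩ := p
  simp only [InRegion, eLen_replicate_N, nLen_replicate_N, nonpos_iff_eq_zero]
  constructor
  · exact fun ⟨hx, hy, _⟩ => ⟨hx, hy⟩
  · rintro ⟨rfl, hy⟩
    exact ⟨rfl, hy, by simp [lowH]⟩

lemma isSchroderTree_replicate_iff {n : ℕ} {T : Finset (ℕ × ℕ)} :
    IsSchroderTree (replicate n N) T ↔ T = {0} ×ˢ Finset.Iic n := by
  simp only [IsSchroderTree, inRegion_replicate_iff, nLen_replicate_N, eLen_replicate_N,
    nonpos_iff_eq_zero]
  constructor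
  · rintro ⟨hreg, -, -, hrows, -⟩
    ext ⟨x, y⟩
    simp only [Finset.mem_product, Finset.mem_singleton, Finset.mem_Iic]
    refine ⟨hreg _, fun ⟨hx, hy⟩ => ?_⟩
    obtain ⟨⟨x', y'⟩, hp, rfl⟩ := hrows y hy
    obtain ⟨rfl, -⟩ := hreg _ hp
    rwa [hx]
  · rintro rfl
    simp only [Finset.mem_product, Finset.mem_singleton, Finset.mem_Iic]
    refine ⟨fun _ => id, fun p hp q hq ⟨hlt, _⟩ => by omega, by simp,
      fun y hy => ⟨(0, y), ⟨rfl, hy⟩, rfl⟩, fun x hx => ⟨(0, 0), ⟨rfl, Nat.zero_le _⟩, hx.symm⟩⟩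

abbrev LastColumn (k : ℕ) := {x : ℕ × Bool // x.1 + x.2.toNat ≤ k}

noncomputable def schroderTreeEquiv (β : List Step) (k : ℕ) :
    (Σ x : LastColumn k, {T // IsSchroderTree (β ++ replicate x.1.1 N) T}) ≃
      {U // IsSchroderTree (β ++ E :: replicate k N) U} :=
  sigmaSubtypeEquivOfGlue (fun x T => glueTree β k x.1.1 x.1.2 T)
    (fun x _ hT => isSchroderTree_glueTree x.2 hT)
    (fun x _ y _ hT hT' h => by
      obtain ⟨hi, hd, rfl⟩ := glueTree_inj x.2 y.2 hT hT' h
      exact ⟨Subtype.ext (Prod.ext hi hd), rfl⟩)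
    (fun _ hU => by
      obtain ⟨i, d, T, hid, hT, rfl⟩ := exists_glueTree_eq hU
      exact ⟨⟨(i, d), hid⟩, T, hT, rfl⟩)

noncomputable def schroderPathEquiv (β : List Step) (k : ℕ) :
    (Σ x : LastColumn k, {l // IsSmallSchroder (β ++ replicate x.1.1 N) l}) ≃
      {π // IsSmallSchroder (β ++ E :: replicate k N) π} :=
  sigmaSubtypeEquivOfGlue (fun x l => l ++ lastStep x.1.2 :: replicate (k - x.1.1 - x.1.2.toNat) N)
    (fun x _ hl => isSmallSchroder_gluePath x.2 hl)
    (fun x _ y _ hl hl' h => by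
      obtain ⟨hi, hd, rfl⟩ := gluePath_inj hl hl' h
      exact ⟨Subtype.ext (Prod.ext hi hd), rfl⟩)
    (fun _ hπ => by
      obtain ⟨i, d, l, hid, hl, rfl⟩ := exists_gluePath_eq hπ
      exact ⟨⟨(i, d), hid⟩, l, hl, rfl⟩)

end Assembly

/-- There is a bijection between the set of ν-Schröder trees and the set of
ν-Schröder paths (given by the left-flushing and right-flushing maps). -/
theorem schroderTrees_equiv_schroderPaths (ν : List Step) (hν : IsLatticePath ν) :
    Nonempty ({T : Finset (ℕ × ℕ) // IsSchroderTree ν T}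
      ≃ {π : List Step // IsSmallSchroder ν π}) := by
  refine IsLatticePath.induction (fun n => ?_) (fun β k ih => ?_) ν hν
  · exact ⟨(Equiv.subtypeEquivRight fun _ => isSchroderTree_replicate_iff).trans <|
      (Equiv.ofUnique _ _).trans
        (Equiv.subtypeEquivRight fun _ => isSmallSchroder_replicate_iff).symm⟩
  · have e (x : LastColumn k) := (ih x.1.1 (by have := x.2; omega)).some
    exact ⟨(schroderTreeEquiv β k).symm.trans
      ((Equiv.sigmaCongrRight e).trans (schroderPathEquiv β k))⟩
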